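/- Let q be an odd prime number with q² not dividing 2^{q−1} − 1, and let k be a positive integer. Let F be the unique intermediate field of ℚ(ζ_{q^{k+1}}, i)/ℚ(i) with [F : ℚ(i)] = q^k. Then 1 + i is a non-norm element of F/ℚ(i). -/

import Mathlib

/-!
Suppose `(1 + i) ^ q ^ (k - 1)` were a norm `N_{F/ℚ(i)}(x)`, and let `M = ℚ(i, ζ)`, so that
`m = [M : F]` satisfies `0 < m ≤ q - 1`. Taking norms down to `ℚ`, the `2`-adic valuation of
`N_{M/ℚ}(x) = N_{ℚ(i)/ℚ}(1 + i) ^ (q ^ (k - 1) * m)` is `q ^ (k - 1) * m`. On the other hand, the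
residue field of any prime of `M` above `2` has `2 ^ f` elements and contains a primitive
`q ^ (k + 1)`-th root of unity, so `q ^ (k + 1) ∣ 2 ^ f - 1`; lifting the exponent, the hypothesis
`q ^ 2 ∤ 2 ^ (q - 1) - 1` forces `q ^ k ∣ f`. Hence `q ^ k` divides the `2`-adic valuation of every
norm from `M`, so `q ∣ m`, which is absurd. As `(1 + i) ^ q ^ k = N_{F/ℚ(i)}(1 + i)`, the order
of `1 + i` modulo norms is exactly `q ^ k`.
-/

open NumberField IntermediateField

noncomputable def normSubgroup (E F : Type*) [Field E] [Field F] [Algebra E F] : Subgroup Eˣ :=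
  MonoidHom.range (Units.map (Algebra.norm E : F →* E))

/-- `γ ∈ E*` is a non-norm element of `F/E` if its order in `Eˣ/N_{F/E}(Fˣ)` equals `[F:E]`. -/
noncomputable def IsNonNormElement (E F : Type*) [Field E] [Field F] [Algebra E F] (γ : E) : Prop :=
  ∃ hγ : γ ≠ 0,
    orderOf (QuotientGroup.mk (s := normSubgroup E F) (Units.mk0 γ hγ)) = Module.finrank E F

/-- The field `ℚ(i)` as a subfield of `ℂ`. -/
noncomputable def QI : IntermediateField ℚ ℂ := ℚ⟮(Complex.I)⟯

/-- The element `1 + i` of `ℚ(i)`. -/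
noncomputable def onePlusI : QI :=
  ⟨1 + Complex.I, add_mem (one_mem _) (IntermediateField.mem_adjoin_simple_self ℚ Complex.I)⟩

open Module

theorem Nat.pow_dvd_of_pow_succ_dvd_pow_sub_one {q a k f : ℕ} (hq : q.Prime) (hodd : Odd q)
    (hqa : ¬ q ∣ a) (hwief : ¬ q ^ 2 ∣ a ^ (q - 1) - 1) (hdvd : q ^ (k + 1) ∣ a ^ f - 1) :
    q ^ k ∣ f := by
  rcases eq_or_ne f 0 with rfl | hf
  · simp
  have := Fact.mk hq
  have hqa' : ¬ q ∣ a ^ (q - 1) := fun h ↦ hqa (hq.dvd_of_dvd_pow h)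
  have hlt : 1 < a ^ (q - 1) := by
    rcases Nat.lt_or_ge 1 a with ha | ha
    · exact Nat.one_lt_pow (by have := hq.two_le; omega) ha
    · interval_cases a <;> simp_all
  have hfermat : q ∣ a ^ (q - 1) - 1 :=
    (Nat.modEq_iff_dvd' hlt.le).mp
      (Nat.ModEq.pow_card_sub_one_eq_one hq (hq.coprime_iff_not_dvd.mpr hqa).symm).symm
  -- Lift the exponent from `a ^ (q - 1)` rather than from `a`: its valuation is exactly one.
  have hlte := padicValNat.pow_sub_pow hodd (n := f) hlt (by simpa using hfermat) hqa' hf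
  have hv : padicValNat q (a ^ (q - 1) - 1) < 2 := by
    by_contra! h
    exact hwief ((padicValNat_dvd_iff_le (Nat.sub_ne_zero_of_lt hlt)).mpr h)
  have hk : k + 1 ≤ padicValNat q ((a ^ (q - 1)) ^ f - 1 ^ f) := by
    have hne : (a ^ (q - 1)) ^ f - 1 ^ f ≠ 0 := by
      simpa using Nat.sub_ne_zero_of_lt (Nat.one_lt_pow hf hlt)
    refine (padicValNat_dvd_iff_le hne).mp (hdvd.trans ?_)
    simpa [← pow_mul, mul_comm] using Nat.sub_dvd_pow_sub_pow (a ^ f) 1 (q - 1)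
  exact (padicValNat_dvd_iff_le hf).mpr (by omega)

theorem FiniteField.pow_succ_dvd_card_sub_one {K : Type*} [Field K] [Finite K] {q k : ℕ}
    (hq : q.Prime) (hqK : (q : K) ≠ 0) {ζ : K} (hζ : ζ ^ q ^ (k + 1) = 1)
    (hζq : ζ ^ q ^ k - 1 ∣ (q : K)) : q ^ (k + 1) ∣ Nat.card K - 1 := by
  have := Fact.mk hq
  have := Fintype.ofFinite K
  have hord : orderOf ζ = q ^ (k + 1) := by
    refine orderOf_eq_prime_pow (fun h ↦ hqK ?_) hζ
    rwa [h, sub_self, zero_dvd_iff] at hζq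
  have hζ0 : ζ ≠ 0 := (IsUnit.of_pow_eq_one hζ (pow_ne_zero _ hq.ne_zero)).ne_zero
  rw [← hord, Nat.card_eq_fintype_card]
  exact orderOf_dvd_of_pow_eq_one (FiniteField.pow_card_sub_one_eq_one ζ hζ0)

section absNorm

variable {O : Type*} [CommRing O] [IsDedekindDomain O] [Module.Free ℤ O]
  {p q k : ℕ} (hp : p.Prime) (hq : q.Prime) (hodd : Odd q) (hpq : p ≠ q)
  (hwief : ¬ q ^ 2 ∣ p ^ (q - 1) - 1) {ζ : O} (hζ : IsPrimitiveRoot ζ (q ^ (k + 1)))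
include hp hq hodd hpq hwief hζ

theorem Ideal.pow_dvd_padicValNat_absNorm_of_isMaximal (P : Ideal O) [P.IsMaximal] :
    q ^ k ∣ padicValNat p (absNorm P) := by
  rcases eq_or_ne (absNorm P) 0 with h0 | h0
  · simp [h0]
  have : Finite (O ⧸ P) := (absNorm_ne_zero_iff P).mp h0
  let := Quotient.field P
  have := Fintype.ofFinite (O ⧸ P)
  obtain ⟨ℓ, hℓ, n, hℓprime, hcard⟩ := FiniteField.card' (O ⧸ P)
  rw [absNorm_apply, Submodule.cardQuot_apply, Nat.card_eq_fintype_card, hcard]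
  by_cases hpℓ : p = ℓ
  · subst hpℓ
    rw [padicValNat.prime_pow (hp := ⟨hp⟩)]
    have hqP : ((q : O) : O ⧸ P) ≠ 0 := by
      rw [map_natCast, Ne, CharP.cast_eq_zero_iff (O ⧸ P) p, Nat.prime_dvd_prime_iff_eq hp hq]
      exact hpq
    have hζq : ζ ^ q ^ k - 1 ∣ (q : O) :=
      (hζ.pow (pow_pos hq.pos _) (pow_succ q k)).sub_one_dvd_natCast hq.one_lt
    refine Nat.pow_dvd_of_pow_succ_dvd_pow_sub_one hq hodd
      (fun h ↦ hpq ((Nat.prime_dvd_prime_iff_eq hq hp).mp h).symm) hwief ?_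
    rw [← hcard, ← Nat.card_eq_fintype_card]
    refine FiniteField.pow_succ_dvd_card_sub_one hq hqP (ζ := Quotient.mk P ζ) ?_ ?_
    · rw [← map_pow, hζ.pow_eq_one, map_one]
    · simpa using map_dvd (Quotient.mk P) hζq
  · rw [padicValNat.eq_zero_of_not_dvd
      (fun h ↦ hpℓ ((Nat.prime_dvd_prime_iff_eq hp hℓprime).mp (hp.dvd_of_dvd_pow h)))]
    exact dvd_zero _

theorem Ideal.pow_dvd_padicValNat_absNorm (I : Ideal O) :
    q ^ k ∣ padicValNat p (absNorm I) := by
  have := Fact.mk hp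
  induction I using UniqueFactorizationMonoid.induction_on_prime with
  | h₁ => simp
  | h₂ I hI => simp [Ideal.isUnit_iff.mp hI]
  | h₃ I P hI hP ih =>
    have : P.IsMaximal := (isPrime_of_prime hP).isMaximal hP.ne_zero
    rw [map_mul]
    rcases eq_or_ne (absNorm P * absNorm I) 0 with h0 | h0
    · simp [h0]
    rw [padicValNat.mul (left_ne_zero_of_mul h0) (right_ne_zero_of_mul h0)]
    exact dvd_add (pow_dvd_padicValNat_absNorm_of_isMaximal hp hq hodd hpq hwief hζ P) ih

end absNorm

namespace NumberField

variable {M : Type*} [Field M] [NumberField M]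

theorem padicValRat_norm_eq_padicValNat_absNorm (p : ℕ) (x : 𝓞 M) :
    padicValRat p (Algebra.norm ℚ (x : M)) = padicValNat p (Ideal.absNorm (Ideal.span {x})) := by
  rw [← Algebra.coe_norm_int, padicValRat.of_int, Ideal.absNorm_span_singleton, padicValInt]

variable {p q k : ℕ} (hp : p.Prime) (hq : q.Prime) (hodd : Odd q) (hpq : p ≠ q)
  (hwief : ¬ q ^ 2 ∣ p ^ (q - 1) - 1) {ζ : M} (hζ : IsPrimitiveRoot ζ (q ^ (k + 1)))
include hp hq hodd hpq hwief hζ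

theorem pow_dvd_padicValRat_norm (β : M) : (q ^ k : ℤ) ∣ padicValRat p (Algebra.norm ℚ β) := by
  have := Fact.mk hp
  have : NeZero (q ^ (k + 1)) := ⟨pow_ne_zero _ hq.ne_zero⟩
  rcases eq_or_ne β 0 with rfl | hβ
  · simp
  obtain ⟨x, y, -, rfl⟩ := IsFractionRing.div_surjective (A := 𝓞 M) β
  obtain ⟨hx, hy⟩ : (x : M) ≠ 0 ∧ (y : M) ≠ 0 := by simpa using hβ
  have hdvd (z : 𝓞 M) : (q ^ k : ℤ) ∣ padicValRat p (Algebra.norm ℚ (z : M)) := by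
    rw [padicValRat_norm_eq_padicValNat_absNorm]
    exact_mod_cast Ideal.pow_dvd_padicValNat_absNorm hp hq hodd hpq hwief
      hζ.toInteger_isPrimitiveRoot _
  rw [div_eq_mul_inv, map_mul, Algebra.norm_inv, padicValRat.mul
    (Algebra.norm_ne_zero_iff.mpr hx) (inv_ne_zero (Algebra.norm_ne_zero_iff.mpr hy)),
    padicValRat.inv]
  exact dvd_sub (hdvd x) (hdvd y)

theorem pow_dvd_mul_finrank_mul_padicValRat_of_norm_eq {E F : Type*} [Field E] [CharZero E]
    [Field F] [Algebra E F] [Algebra F M] [Algebra E M] [IsScalarTower E F M] {x : F} {γ : E}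
    {j : ℕ} (hx : Algebra.norm E x = γ ^ j) :
    (q ^ k : ℤ) ∣ j * finrank F M * padicValRat p (Algebra.norm ℚ γ) := by
  have hN : Algebra.norm ℚ (algebraMap F M x) = Algebra.norm ℚ γ ^ (j * finrank F M) := by
    rw [← Algebra.norm_norm (S := E), ← Algebra.norm_norm (R := E) (S := F),
      Algebra.norm_algebraMap, map_pow, hx, ← pow_mul, map_pow]
  have := Fact.mk hp
  have := pow_dvd_padicValRat_norm hp hq hodd hpq hwief hζ (algebraMap F M x)
  rwa [hN, padicValRat.pow, Nat.cast_mul] at this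

end NumberField

open Polynomial in
theorem IsPrimitiveRoot.finrank_adjoin_le_totient {K L : Type*} [Field K] [Field L] [Algebra K L]
    {ζ : L} {n : ℕ} (hn : 0 < n) (hζ : IsPrimitiveRoot ζ n) : finrank K K⟮ζ⟯ ≤ n.totient := by
  rw [adjoin.finrank (hζ.isIntegral hn).tower_top, ← natDegree_cyclotomic n K]
  refine natDegree_le_of_dvd (minpoly.dvd K ζ ?_) (cyclotomic_ne_zero n K)
  rw [aeval_def, ← eval_map, map_cyclotomic]
  exact hζ.isRoot_cyclotomic hn

theorem pow_finrank_mem_normSubgroup (E F : Type*) [Field E] [Field F] [Algebra E F] (u : Eˣ) :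
    u ^ finrank E F ∈ normSubgroup E F :=
  ⟨Units.map (algebraMap E F : E →* F) u, Units.ext <| by simp [Algebra.norm_algebraMap]⟩

theorem isIntegral_I : IsIntegral ℚ Complex.I :=
  (Complex.isPrimitiveRoot_I.isIntegral four_pos).tower_top

instance : FiniteDimensional ℚ QI := adjoin.finiteDimensional isIntegral_I

theorem finrank_QI : finrank ℚ QI = 2 := by
  rw [QI, adjoin.finrank isIntegral_I,
    ← Polynomial.cyclotomic_eq_minpoly_rat Complex.isPrimitiveRoot_I four_pos,
    Polynomial.natDegree_cyclotomic]
  decide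

theorem padicValRat_two_norm_onePlusI : padicValRat 2 (Algebra.norm ℚ onePlusI) = 1 := by
  have := Fact.mk Nat.prime_two
  let i : QI := ⟨Complex.I, mem_adjoin_simple_self ℚ Complex.I⟩
  have hsq : onePlusI ^ 2 = 2 * i := Subtype.ext <| by
    have h2 : ((2 : QI) : ℂ) = 2 := rfl
    simp only [onePlusI, i, SubmonoidClass.mk_pow, MulMemClass.coe_mul, h2]
    linear_combination Complex.I_sq
  have hi : i ^ 4 = 1 := Subtype.ext (by simp [i])
  have hNi0 : Algebra.norm ℚ i ≠ 0 :=
    Algebra.norm_ne_zero_iff.mpr (IsUnit.of_pow_eq_one hi four_ne_zero).ne_zero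
  have hNi : padicValRat 2 (Algebra.norm ℚ i) = 0 := by
    have : padicValRat 2 (Algebra.norm ℚ (i ^ 4)) = 0 := by rw [hi, map_one, padicValRat.one]
    rw [map_pow, padicValRat.pow] at this
    omega
  have h2 : padicValRat 2 2 = 1 := by exact_mod_cast padicValRat.self (p := 2) one_lt_two
  have key : padicValRat 2 (Algebra.norm ℚ (onePlusI ^ 2)) =
      padicValRat 2 (Algebra.norm ℚ (algebraMap ℚ QI 2 * i)) := by
    rw [hsq, map_ofNat]
  rw [map_pow, map_mul, Algebra.norm_algebraMap, finrank_QI, padicValRat.pow,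
    padicValRat.mul (by norm_num) hNi0, padicValRat.pow, hNi, h2] at key
  omega

theorem onePlusI_ne_zero : onePlusI ≠ 0 := fun h ↦ by
  simpa [onePlusI, Complex.ext_iff] using congrArg Subtype.val h

theorem onePlusI_pow_notMem_normSubgroup {q k : ℕ} (hq : q.Prime) (hodd : Odd q)
    (hwief : ¬ q ^ 2 ∣ 2 ^ (q - 1) - 1) {ζ : ℂ} (hζ : IsPrimitiveRoot ζ (q ^ (k + 2)))
    {F : IntermediateField QI ℂ} (hFsub : F ≤ QI⟮ζ⟯) (hFdeg : finrank QI F = q ^ (k + 1)) :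
    Units.mk0 onePlusI onePlusI_ne_zero ^ q ^ k ∉ normSubgroup QI F := by
  rintro ⟨x, hx⟩
  let M := QI⟮ζ⟯
  let : Algebra F M := (inclusion hFsub).toAlgebra
  have : IsScalarTower QI F M := .of_algebraMap_eq fun _ ↦ rfl
  have : FiniteDimensional QI M :=
    adjoin.finiteDimensional (hζ.isIntegral (pow_pos hq.pos _)).tower_top
  have : NumberField M := { to_finiteDimensional := Module.Finite.trans QI M }
  have : FiniteDimensional F M := .right QI F M
  have : Module.Free F M := .of_divisionRing F M
  have hm0 : 0 < finrank F M := Module.finrank_pos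
  have hm : finrank F M ≤ q - 1 := by
    refine Nat.le_of_mul_le_mul_left ?_ (pow_pos hq.pos (k + 1))
    calc q ^ (k + 1) * finrank F M = finrank QI M := by rw [← hFdeg, Module.finrank_mul_finrank]
      _ ≤ (q ^ (k + 2)).totient := hζ.finrank_adjoin_le_totient (pow_pos hq.pos _)
      _ = q ^ (k + 1) * (q - 1) := Nat.totient_prime_pow_succ hq _
  have h2q : 2 ≠ q := by rintro rfl; exact Nat.not_even_iff_odd.mpr hodd even_two
  have hζM : IsPrimitiveRoot (⟨ζ, mem_adjoin_simple_self QI ζ⟩ : M) (q ^ (k + 2)) :=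
    IsPrimitiveRoot.coe_submonoidClass_iff.mp hζ
  have hnorm : Algebra.norm QI (x : F) = onePlusI ^ q ^ k := by
    simpa using congrArg Units.val hx
  have hdvd := NumberField.pow_dvd_mul_finrank_mul_padicValRat_of_norm_eq Nat.prime_two hq hodd
    h2q hwief hζM hnorm
  rw [padicValRat_two_norm_onePlusI, mul_one, pow_succ] at hdvd
  have hqm : q ∣ finrank F M := by
    exact_mod_cast (mul_dvd_mul_iff_left (pow_ne_zero k (mod_cast hq.ne_zero))).mp hdvd
  exact absurd (Nat.le_of_dvd hm0 hqm) (by omega)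

theorem statement8 (q k : ℕ) (hq : q.Prime) (hodd : Odd q)
    (hwief : ¬ q ^ 2 ∣ 2 ^ (q - 1) - 1) (hk : 0 < k)
    (ζ : ℂ) (hζ : IsPrimitiveRoot ζ (q ^ (k + 1)))
    (F : IntermediateField ↥QI ℂ) (hFsub : F ≤ IntermediateField.adjoin ↥QI {ζ})
    (hFdeg : Module.finrank ↥QI ↥F = q ^ k) :
    IsNonNormElement ↥QI ↥F onePlusI := by
  obtain ⟨k, rfl⟩ := Nat.exists_eq_add_one_of_ne_zero hk.ne'
  have := Fact.mk hq
  refine ⟨onePlusI_ne_zero, ?_⟩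
  rw [hFdeg]
  apply orderOf_eq_prime_pow
  · rw [← QuotientGroup.mk_pow, QuotientGroup.eq_one_iff]
    exact onePlusI_pow_notMem_normSubgroup hq hodd hwief hζ hFsub hFdeg
  · rw [← QuotientGroup.mk_pow, QuotientGroup.eq_one_iff, ← hFdeg]
    exact pow_finrank_mem_normSubgroup _ _ _
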